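/- Let $S$ be a semigroup such that for every injective sequence $(a_n)$ and every finite coloring of $S$ there is an injective sumsequence $(b_n)$ of $(a_n)$ with $FS(b_n)$ monochromatic. Then the family of proper IP sets in $S$ is partition regular: for every finite partition of a proper IP set, some part is a proper IP set. -/

import Mathlib

/-- The ordered sum `a_{i_1} + ⋯ + a_{i_m}` over a finite index set
`F = {i_1 < ⋯ < i_m}` (junk value `a 0` if `F = ∅`). -/
def ordsum {S : Type*} [AddSemigroup S] (a : ℕ → S) (F : Finset ℕ) : S :=
  match F.sort (· ≤ ·) with
  | [] => a 0
  | i :: l => l.foldl (fun s j => s + a j) (a i)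

/-- `F < G`: every element of `F` is smaller than every element of `G`. -/
def FinsetLT (F G : Finset ℕ) : Prop := ∀ i ∈ F, ∀ j ∈ G, i < j

/-- `FS(a_1, a_2, …)`: the set of all finite ordered sums of the sequence `a`. -/
def FSset {S : Type*} [AddSemigroup S] (a : ℕ → S) : Set S :=
  {s | ∃ F : Finset ℕ, F.Nonempty ∧ ordsum a F = s}

/-- `FS(a_n, a_{n+1}, …)`: finite ordered sums with all indices `≥ n`. -/
def FStail {S : Type*} [AddSemigroup S] (a : ℕ → S) (n : ℕ) : Set S :=
  {s | ∃ F : Finset ℕ, F.Nonempty ∧ (∀ i ∈ F, n ≤ i) ∧ ordsum a F = s}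

/-- A sequence is proper if `a_{F₁} ≠ a_{F₂}` whenever `F₁ < F₂`. -/
def IsProperSeq {S : Type*} [AddSemigroup S] (a : ℕ → S) : Prop :=
  ∀ F G : Finset ℕ, F.Nonempty → G.Nonempty → FinsetLT F G →
    ordsum a F ≠ ordsum a G

/-- `b` is a sumsequence of `a`: `b_k = a_{F_k}` for finite index sets `F₁ < F₂ < ⋯`. -/
def IsSumseq {S : Type*} [AddSemigroup S] (a b : ℕ → S) : Prop :=
  ∃ F : ℕ → Finset ℕ, (∀ k, (F k).Nonempty) ∧
    (∀ k, FinsetLT (F k) (F (k + 1))) ∧ (∀ k, b k = ordsum a (F k))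


/-- A proper IP set: contains `FS(b)` for an injective sequence `b`. -/
def IsProperIP {S : Type*} [AddSemigroup S] (A : Set S) : Prop :=
  ∃ b : ℕ → S, Function.Injective b ∧ FSset b ⊆ A

/-- Partition regularity of the family of proper IP sets of `S`. -/
def ProperIPPartReg (S : Type*) [AddSemigroup S] : Prop :=
  ∀ A : Set S, IsProperIP A → ∀ (k : ℕ) (c : S → Fin k),
    ∃ i : Fin k, IsProperIP {s ∈ A | c s = i}

/-- `FS(b_0, …, b_{n-1})`: ordered sums over nonempty `F ⊆ {0, …, n-1}`. -/
def FSfin {S : Type*} [AddSemigroup S] (a : ℕ → S) (n : ℕ) : Set S :=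
  {s | ∃ F : Finset ℕ, F.Nonempty ∧ F ⊆ Finset.range n ∧ ordsum a F = s}

/-- `FS_{≥2}(a)`: ordered sums with at least two summands. -/
def FS2set {S : Type*} [AddSemigroup S] (a : ℕ → S) : Set S :=
  {s | ∃ F : Finset ℕ, 2 ≤ F.card ∧ ordsum a F = s}

/-!
If `b` is a sumsequence of `a` with blocks `F₀ < F₁ < ⋯`, then the ordered sum of `b` over `K`
is the ordered sum of `a` over `⋃_{k ∈ K} F_k`, so `FS(b) ⊆ FS(a)`. Applying the hypothesis to
an injective `a` with `FS(a) ⊆ A` thus gives an injective `b` with `FS(b)` monochromatic and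
inside `A`.
-/

open Finset

section OrderedSums

variable {S : Type*} [AddSemigroup S]

lemma ordsum_singleton (a : ℕ → S) (i : ℕ) : ordsum a {i} = a i := by
  simp [ordsum]

lemma ordsum_insert_of_forall_lt (a : ℕ → S) {i : ℕ} {F : Finset ℕ} (hF : F.Nonempty)
    (hi : ∀ j ∈ F, i < j) : ordsum a (insert i F) = a i + ordsum a F := by
  obtain ⟨j, l, hl⟩ := List.exists_cons_of_ne_nil (l := F.sort (· ≤ ·)) fun h => hF.ne_empty
    (by simpa using congrArg List.length h)
  have hsort : (insert i F).sort (· ≤ ·) = i :: j :: l := by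
    rw [sort_insert _ (fun j hj => (hi j hj).le) (fun h => lt_irrefl i (hi i h)), hl]
  simp only [ordsum, hsort, hl, List.foldl_cons, ← List.foldl_map]
  exact List.foldl_assoc

lemma ordsum_union (a : ℕ → S) {F G : Finset ℕ} (hF : F.Nonempty) (hG : G.Nonempty)
    (h : FinsetLT F G) : ordsum a (F ∪ G) = ordsum a F + ordsum a G := by
  induction F using Finset.induction_on_min with
  | empty => exact absurd hF Finset.not_nonempty_empty
  | insert i F hi ih =>
    have hiG : ∀ j ∈ G, i < j := h i (mem_insert_self i F)
    rcases F.eq_empty_or_nonempty with rfl | hF'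
    · rw [insert_empty, singleton_union, ordsum_insert_of_forall_lt a hG hiG, ordsum_singleton]
    · have hiFG : ∀ j ∈ F ∪ G, i < j := fun j hj =>
        (mem_union.1 hj).elim (hi j) (hiG j)
      rw [insert_union, ordsum_insert_of_forall_lt a (hF'.mono subset_union_left) hiFG,
        ih hF' fun j hj => h j (mem_insert_of_mem hj), ordsum_insert_of_forall_lt a hF' hi,
        add_assoc]

lemma finsetLT_of_lt {F : ℕ → Finset ℕ} (hne : ∀ k, (F k).Nonempty)
    (hlt : ∀ k, FinsetLT (F k) (F (k + 1))) {k l : ℕ} (hkl : k < l) : FinsetLT (F k) (F l) := by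
  induction l, hkl using Nat.le_induction with
  | base => exact hlt k
  | succ l _ ih =>
    intro i hi j hj
    obtain ⟨x, hx⟩ := hne l
    exact (ih i hi x hx).trans (hlt l x hx j hj)

lemma ordsum_ordsum_eq_ordsum_biUnion (a : ℕ → S) {F : ℕ → Finset ℕ}
    (hne : ∀ k, (F k).Nonempty) (hlt : ∀ k, FinsetLT (F k) (F (k + 1))) {K : Finset ℕ}
    (hK : K.Nonempty) : ordsum (fun k => ordsum a (F k)) K = ordsum a (K.biUnion F) := by
  induction K using Finset.induction_on_min with
  | empty => exact absurd hK Finset.not_nonempty_empty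
  | insert m K hm ih =>
    rcases K.eq_empty_or_nonempty with rfl | hK'
    · simp [ordsum_singleton]
    · have hmK : FinsetLT (F m) (K.biUnion F) := fun i hi j hj => by
        obtain ⟨x, hx, hjx⟩ := mem_biUnion.1 hj
        exact finsetLT_of_lt hne hlt (hm x hx) i hi j hjx
      rw [ordsum_insert_of_forall_lt _ hK' hm, ih hK', biUnion_insert,
        ordsum_union a (hne m) (hK'.biUnion fun k _ => hne k) hmK]

lemma FSset_subset_of_isSumseq {a b : ℕ → S} (h : IsSumseq a b) : FSset b ⊆ FSset a := by
  obtain ⟨F, hne, hlt, hb⟩ := h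
  obtain rfl : b = fun k => ordsum a (F k) := funext hb
  rintro s ⟨K, hK, rfl⟩
  exact ⟨K.biUnion F, hK.biUnion fun k _ => hne k,
    (ordsum_ordsum_eq_ordsum_biUnion a hne hlt hK).symm⟩

end OrderedSums

theorem stmt14 {S : Type*} [AddSemigroup S]
    (H : ∀ a : ℕ → S, Function.Injective a → ∀ (k : ℕ) (c : S → Fin k),
      ∃ b : ℕ → S, IsSumseq a b ∧ Function.Injective b ∧
        ∃ i : Fin k, ∀ s ∈ FSset b, c s = i) :
    ∀ A : Set S, IsProperIP A → ∀ (k : ℕ) (c : S → Fin k),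
      ∃ i : Fin k, IsProperIP {s ∈ A | c s = i} := by
  intro A ⟨a, ha, hFA⟩ k c
  obtain ⟨b, hsum, hinj, i, hi⟩ := H a ha k c
  exact ⟨i, b, hinj, fun s hs => ⟨hFA (FSset_subset_of_isSumseq hsum hs), hi s hs⟩⟩
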